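/- (Theorem 3) Let |Ψ⟩ be a unit vector in ℂ^{d_A} ⊗ ℂ^{d_B} ⊗ ℂ^{d_C} with ρ_ABC = |Ψ⟩⟨Ψ|, and let ρ_AB and ρ_AC be the reduced states. Then for every projective measurement {Π_i} on ℂ^{d_C}, the entanglement of formation satisfies E_F(ρ_AB) ≤ Σ_i p_i S(ρ_{A,i}), where p_i = Tr[(I_A ⊗ Π_i) ρ_AC] and ρ_{A,i} = Tr_C[(I_A ⊗ Π_i) ρ_AC (I_A ⊗ Π_i)]/p_i are the post-measurement probabilities and conditional states of A (the sum taken over outcomes with p_i > 0). -/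

import Mathlib

open scoped Kronecker ComplexOrder

/-- Von Neumann entropy (natural logarithm) of a matrix, via its eigenvalues
(`0` if the matrix is not Hermitian; `Real.log 0 = 0` handles zero eigenvalues). -/
noncomputable def vN {n : Type*} [Fintype n] [DecidableEq n] (ρ : Matrix n n ℂ) : ℝ :=
  if h : ρ.IsHermitian then -∑ i, h.eigenvalues i * Real.log (h.eigenvalues i) else 0

/-- Partial trace over the second tensor factor. -/
noncomputable def ptraceB {A B : Type*} [Fintype B] (ρ : Matrix (A × B) (A × B) ℂ) :
    Matrix A A ℂ := Matrix.of fun a a' => ∑ b, ρ (a, b) (a', b)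

/-- Partial trace over the first tensor factor. -/
noncomputable def ptraceA {A B : Type*} [Fintype A] (ρ : Matrix (A × B) (A × B) ℂ) :
    Matrix B B ℂ := Matrix.of fun b b' => ∑ a, ρ (a, b) (a, b')

/-- Partial trace over the third factor of a tripartite system `A × B × C`. -/
noncomputable def ptraceC3 {A B C : Type*} [Fintype C] (ρ : Matrix (A × B × C) (A × B × C) ℂ) :
    Matrix (A × B) (A × B) ℂ := Matrix.of fun x y => ∑ c, ρ (x.1, x.2, c) (y.1, y.2, c)

/-- Partial trace over the second factor of a tripartite system `A × B × C`. -/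
noncomputable def ptraceB3 {A B C : Type*} [Fintype B] (ρ : Matrix (A × B × C) (A × B × C) ℂ) :
    Matrix (A × C) (A × C) ℂ := Matrix.of fun x y => ∑ b, ρ (x.1, b, x.2) (y.1, b, y.2)

/-- Entanglement of formation: infimum of the average local entropy over finite
pure-state ensembles realizing `ρAB` (entropies in natural logarithm). -/
noncomputable def EoF {A B : Type*} [Fintype A] [DecidableEq A] [Fintype B] [DecidableEq B]
    (ρAB : Matrix (A × B) (A × B) ℂ) : ℝ :=
  sInf { x : ℝ | ∃ (n : ℕ) (p : Fin n → ℝ) (ψ : Fin n → (A × B → ℂ)),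
    (∀ i, 0 ≤ p i) ∧ (∑ i, p i = 1) ∧ (∀ i, ∑ v, ‖ψ i v‖ ^ 2 = 1) ∧
    ρAB = ∑ i, (p i : ℂ) • Matrix.vecMulVec (ψ i) (star (ψ i)) ∧
    x = ∑ i, p i * vN (ptraceB (Matrix.vecMulVec (ψ i) (star (ψ i)))) }

/-- Probability `p_i = Tr[(I_A ⊗ Π) ρ_AC]` of measurement outcome `Pj` (a projector
on `C`) in the state `ρAC`. -/
noncomputable def measProb {A C : Type*} [Fintype A] [DecidableEq A] [Fintype C] [DecidableEq C]
    (ρAC : Matrix (A × C) (A × C) ℂ) (Pj : Matrix C C ℂ) : ℝ :=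
  ((((1 : Matrix A A ℂ) ⊗ₖ Pj) * ρAC).trace).re

/-- Post-measurement conditional state
`ρ_{A,i} = Tr_C[(I_A ⊗ Π) ρ_AC (I_A ⊗ Π)] / p_i` of `A` given outcome `Pj` on `C`. -/
noncomputable def measState {A C : Type*} [Fintype A] [DecidableEq A] [Fintype C] [DecidableEq C]
    (ρAC : Matrix (A × C) (A × C) ℂ) (Pj : Matrix C C ℂ) : Matrix A A ℂ :=
  ((measProb ρAC Pj : ℂ))⁻¹ •
    ptraceB (((1 : Matrix A A ℂ) ⊗ₖ Pj) * ρAC * ((1 : Matrix A A ℂ) ⊗ₖ Pj))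

/-!
Reading the outcome `i` of `{Π_i}` together with a basis vector `c` of `C` splits `Ψ` into the
unnormalised vectors `φ_{ic} = (I ⊗ I ⊗ ⟨c|Π_i) Ψ` of `AB`. Because the `Π_i` are Hermitian
idempotents summing to `1`, the pure states `φ_{ic}` form an ensemble for `ρ_AB`, so `E_F(ρ_AB)`
is at most their average `A`-entropy. For fixed `i` the `A`-marginals of the `φ_{ic}` add up to
`p_i ρ_{A,i}`, and concavity of the von Neumann entropy bounds their average entropy by
`p_i S(ρ_{A,i})`. Concavity follows from pinching: the diagonal of a state in any orthonormal basis
has Shannon entropy at least its von Neumann entropy, with equality in an eigenbasis, and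
`x ↦ -x log x` is concave.
-/

open Matrix

lemma re_diag_nonneg {n : Type*} [Fintype n] {σ : Matrix n n ℂ} (hσ : σ.PosSemidef) (j : n) :
    0 ≤ (σ j j).re :=
  (Complex.nonneg_iff.mp hσ.diag_nonneg).1

section Entropy

variable {n : Type*} [Fintype n] [DecidableEq n]

lemma vN_eq_sum_negMulLog {ρ : Matrix n n ℂ} (hρ : ρ.IsHermitian) :
    vN ρ = ∑ i, Real.negMulLog (hρ.eigenvalues i) := by
  simp [vN, hρ, Real.negMulLog, Finset.sum_neg_distrib]

lemma vN_nonneg {ρ : Matrix n n ℂ} (hρ : ρ.PosSemidef) (htr : ρ.trace = 1) : 0 ≤ vN ρ := by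
  have hsum : ∑ i, hρ.1.eigenvalues i = 1 := by
    simpa [htr] using (congrArg Complex.re hρ.1.trace_eq_sum_eigenvalues).symm
  rw [vN_eq_sum_negMulLog hρ.1]
  refine Finset.sum_nonneg fun i _ => Real.negMulLog_nonneg (hρ.eigenvalues_nonneg i) ?_
  exact hsum ▸ Finset.single_le_sum (fun j _ => hρ.eigenvalues_nonneg j) (Finset.mem_univ i)

lemma sum_norm_sq_row_of_mem_unitaryGroup {U : Matrix n n ℂ} (hU : U ∈ unitaryGroup n ℂ) (k : n) :
    ∑ j, ‖U k j‖ ^ 2 = 1 := by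
  have h := congrFun (congrFun (mem_unitaryGroup_iff.mp hU) k) k
  simp only [mul_apply, star_apply, RCLike.star_def, Complex.mul_conj, one_apply_eq,
    Complex.normSq_eq_norm_sq] at h
  exact_mod_cast h

lemma sum_norm_sq_col_of_mem_unitaryGroup {U : Matrix n n ℂ} (hU : U ∈ unitaryGroup n ℂ) (j : n) :
    ∑ k, ‖U k j‖ ^ 2 = 1 := by
  simpa using sum_norm_sq_row_of_mem_unitaryGroup (Unitary.star_mem hU) j

lemma re_diag_conj_eq_sum_eigenvalues {σ : Matrix n n ℂ} (hσ : σ.IsHermitian) (W : Matrix n n ℂ)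
    (j : n) :
    ((star W * σ * W) j j).re =
      ∑ k, ‖(star (hσ.eigenvectorUnitary : Matrix n n ℂ) * W) k j‖ ^ 2 * hσ.eigenvalues k := by
  set U := star (hσ.eigenvectorUnitary : Matrix n n ℂ) * W
  have hconj : star W * σ * W = star U * diagonal (RCLike.ofReal ∘ hσ.eigenvalues) * U := by
    conv_lhs => rw [hσ.spectral_theorem, Unitary.conjStarAlgAut_apply]
    simp only [U, star_mul, star_star, Matrix.mul_assoc]
  rw [hconj, Matrix.mul_assoc, mul_apply, Complex.re_sum]
  refine Finset.sum_congr rfl fun k _ => ?_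
  simp only [diagonal_mul, star_apply, Function.comp_apply, RCLike.star_def]
  rw [show (RCLike.ofReal (hσ.eigenvalues k) : ℂ) = (hσ.eigenvalues k : ℂ) from rfl,
    mul_left_comm, Complex.conj_mul', ← Complex.ofReal_pow, ← Complex.ofReal_mul, Complex.ofReal_re,
    mul_comm]

lemma vN_le_sum_negMulLog_diag {σ : Matrix n n ℂ} (hσ : σ.PosSemidef) {W : Matrix n n ℂ}
    (hW : W ∈ unitaryGroup n ℂ) :
    vN σ ≤ ∑ j, Real.negMulLog ((star W * σ * W) j j).re := by
  set U := star (hσ.1.eigenvectorUnitary : Matrix n n ℂ) * W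
  have hU : U ∈ unitaryGroup n ℂ := mul_mem (Unitary.star_mem (hσ.1.eigenvectorUnitary).2) hW
  calc vN σ = ∑ k, (∑ j, ‖U k j‖ ^ 2) * Real.negMulLog (hσ.1.eigenvalues k) := by
        simp [vN_eq_sum_negMulLog hσ.1, sum_norm_sq_row_of_mem_unitaryGroup hU]
    _ = ∑ j, ∑ k, ‖U k j‖ ^ 2 * Real.negMulLog (hσ.1.eigenvalues k) := by
        simp only [Finset.sum_mul]; exact Finset.sum_comm
    _ ≤ ∑ j, Real.negMulLog (∑ k, ‖U k j‖ ^ 2 * hσ.1.eigenvalues k) :=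
        Finset.sum_le_sum fun j _ => Real.concaveOn_negMulLog.le_map_sum
          (fun k _ => sq_nonneg _) (sum_norm_sq_col_of_mem_unitaryGroup hU j)
          (fun k _ => hσ.eigenvalues_nonneg k)
    _ = ∑ j, Real.negMulLog ((star W * σ * W) j j).re := by
        simp only [re_diag_conj_eq_sum_eigenvalues hσ.1, U]

lemma vN_eq_sum_negMulLog_diag {ρ : Matrix n n ℂ} (hρ : ρ.IsHermitian) :
    vN ρ = ∑ j, Real.negMulLog
      ((star (hρ.eigenvectorUnitary : Matrix n n ℂ) * ρ * hρ.eigenvectorUnitary) j j).re := by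
  have hdiag := hρ.conjStarAlgAut_star_eigenvectorUnitary
  rw [Unitary.conjStarAlgAut_apply, Unitary.coe_star, star_star] at hdiag
  simp [vN_eq_sum_negMulLog hρ, hdiag]

theorem sum_mul_vN_le_vN_sum_smul {ι : Type*} [Fintype ι] {w : ι → ℝ} {σ : ι → Matrix n n ℂ}
    (hw : ∀ i, 0 ≤ w i) (hw1 : ∑ i, w i = 1) (hσ : ∀ i, (σ i).PosSemidef) :
    ∑ i, w i * vN (σ i) ≤ vN (∑ i, (w i : ℂ) • σ i) := by
  have hρ : (∑ i, (w i : ℂ) • σ i).IsHermitian :=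
    (posSemidef_sum _ fun i _ => (hσ i).smul (Complex.zero_le_real.mpr (hw i))).1
  set W := (hρ.eigenvectorUnitary : Matrix n n ℂ)
  have hdiag : ∀ j, ((star W * (∑ i, (w i : ℂ) • σ i) * W) j j).re =
      ∑ i, w i * ((star W * σ i * W) j j).re := fun j => by
    simp only [Matrix.mul_sum, Matrix.sum_mul, mul_smul_comm, smul_mul_assoc, Matrix.sum_apply,
      Matrix.smul_apply, Complex.re_sum, smul_eq_mul, Complex.re_ofReal_mul]
  calc ∑ i, w i * vN (σ i)
      ≤ ∑ i, w i * ∑ j, Real.negMulLog ((star W * σ i * W) j j).re :=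
        Finset.sum_le_sum fun i _ => mul_le_mul_of_nonneg_left
          (vN_le_sum_negMulLog_diag (hσ i) (hρ.eigenvectorUnitary).2) (hw i)
    _ = ∑ j, ∑ i, w i * Real.negMulLog ((star W * σ i * W) j j).re := by
        simp only [Finset.mul_sum]; exact Finset.sum_comm
    _ ≤ ∑ j, Real.negMulLog (∑ i, w i * ((star W * σ i * W) j j).re) :=
        Finset.sum_le_sum fun j _ => Real.concaveOn_negMulLog.le_map_sum (fun i _ => hw i) hw1
          fun i _ => re_diag_nonneg ((hσ i).conjTranspose_mul_mul_same W) j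
    _ = vN (∑ i, (w i : ℂ) • σ i) := by
        simp only [vN_eq_sum_negMulLog_diag hρ, hdiag, W]

end Entropy

section PureStates

variable {n : Type*} [Fintype n]

lemma posSemidef_vecMulVec_star (v : n → ℂ) : (vecMulVec v (star v)).PosSemidef := by
  rw [vecMulVec_eq (Fin 1), ← conjTranspose_replicateCol]
  exact posSemidef_self_mul_conjTranspose _

lemma trace_vecMulVec_star (v : n → ℂ) :
    (vecMulVec v (star v)).trace = ((∑ x, ‖v x‖ ^ 2 : ℝ) : ℂ) := by
  push_cast
  refine Finset.sum_congr rfl fun x _ => ?_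
  rw [diag_apply, vecMulVec_apply, Pi.star_apply, RCLike.star_def, Complex.mul_conj']

lemma exists_unit_vecMulVec_eq_smul [Nonempty n] (φ : n → ℂ) :
    ∃ ψ : n → ℂ, ∑ x, ‖ψ x‖ ^ 2 = 1 ∧
      vecMulVec φ (star φ) = ((∑ x, ‖φ x‖ ^ 2 : ℝ) : ℂ) • vecMulVec ψ (star ψ) := by
  classical
  set q := ∑ x, ‖φ x‖ ^ 2
  by_cases hq : q = 0
  · have hφ : φ = 0 := funext fun x => norm_eq_zero.mp <| pow_eq_zero_iff two_ne_zero |>.mp <|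
      (Finset.sum_eq_zero_iff_of_nonneg fun x _ => sq_nonneg ‖φ x‖).mp hq x (Finset.mem_univ x)
    obtain ⟨x₀⟩ := ‹Nonempty n›
    refine ⟨Pi.single x₀ 1, ?_, ?_⟩
    · rw [Finset.sum_eq_single x₀ fun x _ hx => by simp [hx]] <;> simp
    · simp [hφ, hq]
  · have hq0 : 0 < q := lt_of_le_of_ne (Finset.sum_nonneg fun x _ => sq_nonneg _) (Ne.symm hq)
    refine ⟨((Real.sqrt q)⁻¹ : ℂ) • φ, ?_, ?_⟩
    · simp only [Pi.smul_apply, smul_eq_mul, norm_mul, mul_pow, ← Finset.mul_sum, norm_inv,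
        Complex.norm_real, Real.norm_eq_abs, abs_of_nonneg (Real.sqrt_nonneg q), inv_pow,
        Real.sq_sqrt hq0.le]
      exact inv_mul_cancel₀ hq
    · rw [star_smul, vecMulVec_smul, smul_vecMulVec, smul_smul, smul_smul, star_inv₀,
        Complex.star_def, Complex.conj_ofReal, mul_assoc, ← mul_inv, ← Complex.ofReal_mul,
        Real.mul_self_sqrt hq0.le, mul_inv_cancel₀ (Complex.ofReal_ne_zero.mpr hq), one_smul]

end PureStates

section PartialTrace

variable {A B C : Type*}

lemma ptraceB_vecMulVec [Fintype B] (φ : A × B → ℂ) :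
    ptraceB (vecMulVec φ (star φ)) =
      ∑ b, vecMulVec (fun a => φ (a, b)) (star fun a => φ (a, b)) := by
  ext a a'
  simp [ptraceB, vecMulVec_apply, Matrix.sum_apply]

lemma posSemidef_ptraceB_vecMulVec [Fintype A] [Fintype B] (φ : A × B → ℂ) :
    (ptraceB (vecMulVec φ (star φ))).PosSemidef := by
  rw [ptraceB_vecMulVec]
  exact posSemidef_sum _ fun b _ => posSemidef_vecMulVec_star _

lemma trace_ptraceB [Fintype A] [Fintype B] (M : Matrix (A × B) (A × B) ℂ) :
    (ptraceB M).trace = M.trace := by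
  simp [trace, ptraceB, Fintype.sum_prod_type]

lemma ptraceB_smul [Fintype B] (c : ℂ) (M : Matrix (A × B) (A × B) ℂ) :
    ptraceB (c • M) = c • ptraceB M := by
  ext a a'
  simp [ptraceB, Finset.mul_sum]

lemma trace_ptraceC3 [Fintype A] [Fintype B] [Fintype C] (M : Matrix (A × B × C) (A × B × C) ℂ) :
    (ptraceC3 M).trace = M.trace := by
  simp [trace, ptraceC3, Fintype.sum_prod_type]

lemma trace_ptraceB_vecMulVec_of_unit [Fintype A] [Fintype B] {ψ : A × B → ℂ}
    (hψ : ∑ v, ‖ψ v‖ ^ 2 = 1) : (ptraceB (vecMulVec ψ (star ψ))).trace = 1 := by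
  rw [trace_ptraceB, trace_vecMulVec_star, hψ, Complex.ofReal_one]

end PartialTrace

section EntanglementOfFormation

variable {A B : Type*} [Fintype A] [DecidableEq A] [Fintype B]

lemma vN_ptraceB_nonneg {ψ : A × B → ℂ} (hψ : ∑ v, ‖ψ v‖ ^ 2 = 1) :
    0 ≤ vN (ptraceB (vecMulVec ψ (star ψ))) :=
  vN_nonneg (posSemidef_ptraceB_vecMulVec ψ) (trace_ptraceB_vecMulVec_of_unit hψ)

theorem EoF_le_of_eq_sum [DecidableEq B] {ι : Type*} [Fintype ι] {ρ : Matrix (A × B) (A × B) ℂ}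
    (hρ1 : ρ.trace = 1) {p : ι → ℝ} (hp : ∀ i, 0 ≤ p i) {ψ : ι → A × B → ℂ}
    (hψ : ∀ i, ∑ v, ‖ψ i v‖ ^ 2 = 1)
    (hρ : ρ = ∑ i, (p i : ℂ) • vecMulVec (ψ i) (star (ψ i))) :
    EoF ρ ≤ ∑ i, p i * vN (ptraceB (vecMulVec (ψ i) (star (ψ i)))) := by
  have hp1 : ∑ i, p i = 1 := by
    have h := congrArg trace hρ
    simp only [hρ1, trace_sum, trace_smul, trace_vecMulVec_star, hψ, smul_eq_mul,
      Complex.ofReal_one, mul_one, ← Complex.ofReal_sum] at h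
    exact_mod_cast h.symm
  refine csInf_le ⟨0, ?_⟩ ?_
  · rintro x ⟨n, p', ψ', hp', -, hψ', -, rfl⟩
    exact Finset.sum_nonneg fun i _ => mul_nonneg (hp' i) (vN_ptraceB_nonneg (hψ' i))
  · set e := Fintype.equivFin ι
    refine ⟨Fintype.card ι, p ∘ e.symm, ψ ∘ e.symm, fun i => hp _, ?_, fun i => hψ _, ?_, ?_⟩
    · exact (e.symm.sum_comp p).trans hp1
    · exact hρ.trans (e.symm.sum_comp fun i => (p i : ℂ) • vecMulVec (ψ i) (star (ψ i))).symm
    · exact (e.symm.sum_comp fun i => p i * vN (ptraceB (vecMulVec (ψ i) (star (ψ i))))).symm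

end EntanglementOfFormation

section Tripartite

variable {A B C : Type*} [Fintype C]

/-- `(I_A ⊗ I_B ⊗ P) Ψ`. -/
def mulVecC (P : Matrix C C ℂ) (Ψ : A × B × C → ℂ) : A × B × C → ℂ :=
  fun x => ∑ c, P x.2.2 c * Ψ (x.1, x.2.1, c)

lemma kronecker_mul_ptraceB3_mul_kronecker [Fintype A] [Fintype B] [DecidableEq A]
    [DecidableEq C] {P : Matrix C C ℂ} (hP : P.IsHermitian) (Ψ : A × B × C → ℂ) :
    (1 ⊗ₖ P) * ptraceB3 (vecMulVec Ψ (star Ψ)) * (1 ⊗ₖ P) =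
      ptraceB3 (vecMulVec (mulVecC P Ψ) (star (mulVecC P Ψ))) := by
  ext ⟨a, c⟩ ⟨a', c'⟩
  simp only [ptraceB3, mulVecC, vecMulVec_apply, Pi.star_apply, star_sum, star_mul', mul_apply,
    kroneckerMap_apply, one_apply, of_apply, Fintype.sum_prod_type, ite_mul, mul_ite, one_mul,
    zero_mul, mul_zero, Finset.mul_sum, Finset.sum_mul, Finset.sum_ite_irrel,
    Finset.sum_const_zero, Finset.sum_ite_eq, Finset.sum_ite_eq', Finset.mem_univ, if_true]
  refine (Finset.sum_congr rfl fun _ _ => Finset.sum_comm).trans ?_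
  rw [Finset.sum_comm]
  refine Finset.sum_congr rfl fun b _ => Finset.sum_congr rfl fun c₂ _ =>
    Finset.sum_congr rfl fun c₁ _ => ?_
  rw [hP.apply]
  ring

def sliceC (Φ : A × B × C → ℂ) (c : C) : A × B → ℂ := fun x => Φ (x.1, x.2, c)

def matC (Φ : A × B × C → ℂ) : Matrix (A × B) C ℂ := of fun x c => Φ (x.1, x.2, c)

lemma ptraceC3_vecMulVec (Φ : A × B × C → ℂ) :
    ptraceC3 (vecMulVec Φ (star Φ)) = ∑ c, vecMulVec (sliceC Φ c) (star (sliceC Φ c)) := by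
  ext x y
  simp [ptraceC3, sliceC, vecMulVec_apply, Matrix.sum_apply]

lemma ptraceB_ptraceB3_vecMulVec [Fintype B] (Φ : A × B × C → ℂ) :
    ptraceB (ptraceB3 (vecMulVec Φ (star Φ))) =
      ∑ c, ptraceB (vecMulVec (sliceC Φ c) (star (sliceC Φ c))) := by
  ext a a'
  simp only [ptraceB, ptraceB3, sliceC, of_apply, vecMulVec_apply, Pi.star_apply, Matrix.sum_apply]

lemma ptraceC3_vecMulVec_eq_matC_mul (Φ : A × B × C → ℂ) :
    ptraceC3 (vecMulVec Φ (star Φ)) = matC Φ * (matC Φ)ᴴ := by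
  ext x y
  simp [ptraceC3, matC, vecMulVec_apply, mul_apply]

lemma matC_mulVecC (P : Matrix C C ℂ) (Ψ : A × B × C → ℂ) : matC (mulVecC P Ψ) = matC Ψ * Pᵀ := by
  ext x c
  simp [matC, mulVecC, mul_apply, mul_comm]

lemma sum_ptraceC3_mulVecC [DecidableEq C] {ι : Type*} [Fintype ι] {P : ι → Matrix C C ℂ}
    (hP : ∀ i, (P i).IsHermitian) (hP2 : ∀ i, P i * P i = P i) (hP1 : ∑ i, P i = 1)
    (Ψ : A × B × C → ℂ) :
    ∑ i, ptraceC3 (vecMulVec (mulVecC (P i) Ψ) (star (mulVecC (P i) Ψ))) =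
      ptraceC3 (vecMulVec Ψ (star Ψ)) := by
  have hPT : ∀ i, (P i)ᵀ * ((P i)ᵀ)ᴴ = (P i)ᵀ := fun i => by
    rw [conjTranspose_transpose_eq_transpose_conjTranspose, (hP i).eq, ← transpose_mul, hP2]
  simp only [ptraceC3_vecMulVec_eq_matC_mul, matC_mulVecC, conjTranspose_mul, Matrix.mul_assoc,
    ← Matrix.mul_assoc (P _)ᵀ, hPT, ← Matrix.mul_sum, ← Matrix.sum_mul, ← transpose_sum, hP1,
    transpose_one, Matrix.one_mul]

end Tripartite

section Measurement

variable {A C : Type*} [Fintype A] [DecidableEq A] [Fintype C] [DecidableEq C]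

lemma measProb_eq_re_trace (ρ : Matrix (A × C) (A × C) ℂ) {P : Matrix C C ℂ} (hP : P * P = P) :
    measProb ρ P = (ptraceB ((1 ⊗ₖ P) * ρ * (1 ⊗ₖ P))).trace.re := by
  rw [measProb, trace_ptraceB, trace_mul_cycle, ← mul_kronecker_mul, Matrix.one_mul, hP]

theorem sum_mul_vN_le_measProb_mul_vN_measState (ρ : Matrix (A × C) (A × C) ℂ)
    {P : Matrix C C ℂ} (hP : P * P = P) {ι : Type*} [Fintype ι] {w : ι → ℝ}
    {σ : ι → Matrix A A ℂ} (hw : ∀ k, 0 ≤ w k) (hσ : ∀ k, (σ k).PosSemidef)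
    (hσ1 : ∀ k, (σ k).trace = 1)
    (hN : ptraceB ((1 ⊗ₖ P) * ρ * (1 ⊗ₖ P)) = ∑ k, (w k : ℂ) • σ k) :
    ∑ k, w k * vN (σ k) ≤
      if 0 < measProb ρ P then measProb ρ P * vN (measState ρ P) else 0 := by
  have hp : measProb ρ P = ∑ k, w k := by
    simp [measProb_eq_re_trace ρ hP, hN, trace_sum, trace_smul, hσ1]
  split_ifs with hpos
  · have hstate : measState ρ P = ∑ k, ((w k / measProb ρ P : ℝ) : ℂ) • σ k := by
      rw [measState, hN, Finset.smul_sum]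
      refine Finset.sum_congr rfl fun k _ => ?_
      rw [smul_smul, Complex.ofReal_div, inv_mul_eq_div]
    have hw1 : ∑ k, w k / measProb ρ P = 1 := by
      rw [← Finset.sum_div, ← hp, div_self hpos.ne']
    calc ∑ k, w k * vN (σ k)
        = measProb ρ P * ∑ k, w k / measProb ρ P * vN (σ k) := by
          rw [Finset.mul_sum]
          refine Finset.sum_congr rfl fun k _ => ?_
          field_simp
      _ ≤ measProb ρ P * vN (measState ρ P) := by
          rw [hstate]
          exact mul_le_mul_of_nonneg_left (sum_mul_vN_le_vN_sum_smul
            (fun k => div_nonneg (hw k) hpos.le) hw1 hσ) hpos.le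
  · have hw0 : ∀ k, w k = 0 := fun k =>
      (Finset.sum_eq_zero_iff_of_nonneg fun k _ => hw k).mp
        (le_antisymm (hp ▸ not_lt.mp hpos) (Finset.sum_nonneg fun k _ => hw k)) k
        (Finset.mem_univ k)
    simp [hw0]

end Measurement

/-- Theorem 3: for a tripartite pure state `ρ_ABC = |Ψ⟩⟨Ψ|` and any
projective measurement `{Π_i}` on `C`, the entanglement of formation satisfies
`E_F(ρ_AB) ≤ ∑ᵢ pᵢ S(ρ_{A,i})` (sum over outcomes with `pᵢ > 0`). -/
theorem eof_upper_bound_post_measurement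
    (dA dB dC : ℕ)
    (Ψ : Fin dA × Fin dB × Fin dC → ℂ) (hΨ : ∑ v, ‖Ψ v‖ ^ 2 = 1)
    (ρABC : Matrix (Fin dA × Fin dB × Fin dC) (Fin dA × Fin dB × Fin dC) ℂ)
    (hρ : ρABC = Matrix.vecMulVec Ψ (star Ψ))
    (m : ℕ) (Pj : Fin m → Matrix (Fin dC) (Fin dC) ℂ)
    (hherm : ∀ i, (Pj i).IsHermitian) (hproj : ∀ i, Pj i * Pj i = Pj i)
    (hsum : ∑ i, Pj i = 1) :
    EoF (ptraceC3 ρABC) ≤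
      ∑ i ∈ Finset.univ.filter (fun i => 0 < measProb (ptraceB3 ρABC) (Pj i)),
        measProb (ptraceB3 ρABC) (Pj i) * vN (measState (ptraceB3 ρABC) (Pj i)) := by
  subst hρ
  obtain ⟨a, b, -⟩ : Nonempty (Fin dA × Fin dB × Fin dC) := by
    by_contra h
    simp [not_nonempty_iff.mp h] at hΨ
  have : Nonempty (Fin dA × Fin dB) := ⟨(a, b)⟩
  set φ : Fin m × Fin dC → Fin dA × Fin dB → ℂ := fun ic => sliceC (mulVecC (Pj ic.1) Ψ) ic.2
  choose ψ hψ1 hφψ using fun ic => exists_unit_vecMulVec_eq_smul (φ ic)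
  set q : Fin m × Fin dC → ℝ := fun ic => ∑ x, ‖φ ic x‖ ^ 2
  have hq : ∀ ic, 0 ≤ q ic := fun ic => Finset.sum_nonneg fun x _ => sq_nonneg _
  have hρAB : ptraceC3 (vecMulVec Ψ (star Ψ)) =
      ∑ ic, (q ic : ℂ) • vecMulVec (ψ ic) (star (ψ ic)) := by
    rw [← sum_ptraceC3_mulVecC hherm hproj hsum, Fintype.sum_prod_type]
    exact Finset.sum_congr rfl fun i _ =>
      (ptraceC3_vecMulVec _).trans (Finset.sum_congr rfl fun c _ => hφψ (i, c))
  have hρAB1 : (ptraceC3 (vecMulVec Ψ (star Ψ))).trace = 1 := by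
    rw [trace_ptraceC3, trace_vecMulVec_star, hΨ, Complex.ofReal_one]
  have hN : ∀ i, ptraceB ((1 ⊗ₖ Pj i) * ptraceB3 (vecMulVec Ψ (star Ψ)) * (1 ⊗ₖ Pj i)) =
      ∑ c, (q (i, c) : ℂ) • ptraceB (vecMulVec (ψ (i, c)) (star (ψ (i, c)))) := fun i => by
    rw [kronecker_mul_ptraceB3_mul_kronecker (hherm i), ptraceB_ptraceB3_vecMulVec]
    exact Finset.sum_congr rfl fun c _ => by rw [← ptraceB_smul, ← hφψ (i, c)]
  calc EoF (ptraceC3 (vecMulVec Ψ (star Ψ)))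
      ≤ ∑ ic, q ic * vN (ptraceB (vecMulVec (ψ ic) (star (ψ ic)))) :=
        EoF_le_of_eq_sum hρAB1 hq hψ1 hρAB
    _ = ∑ i, ∑ c, q (i, c) * vN (ptraceB (vecMulVec (ψ (i, c)) (star (ψ (i, c))))) :=
        Fintype.sum_prod_type _
    _ ≤ _ := Finset.sum_le_sum fun i _ =>
        sum_mul_vN_le_measProb_mul_vN_measState _ (hproj i) (fun c => hq (i, c))
          (fun c => posSemidef_ptraceB_vecMulVec _)
          (fun c => trace_ptraceB_vecMulVec_of_unit (hψ1 (i, c))) (hN i)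
    _ = _ := (Finset.sum_filter _ _).symm
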